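/- Define, for θ > 0, z̃₄(θ) = 30(sinh 2θ − 2θ)⁴(cosh θ)²/(cosh 2θ − 1)⁶ and w̃₂(θ) = 3(sinh 2θ − 2θ)³(cosh θ)/(2(cosh 2θ − 1)⁴(sinh θ)). Then lim_{θ→0⁺} (z̃₄(θ), w̃₂(θ)) = (40/27, 2/9) and lim_{θ→∞} (z̃₄(θ), w̃₂(θ)) = (0, 0). That is, the second-order coefficients of the pressureless k = −1 Friedmann spacetime tend to the corresponding components of the rest point SM₄ = (4/3, 2/3, 40/27, 2/9) as t → 0 and to those of M₄ = (0, 1, 0, 0) as t → ∞. -/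

import Mathlib

/-!
Since `cosh 2θ - 1 = 2 sinh² θ`, both coefficients are monomials in `cosh θ` and
`ρ(θ) = (sinh 2θ - 2θ) / sinh³ θ`: `z̃₄ = (15/32) ρ⁴ cosh² θ` and `w̃₂ = (3/32) ρ³ cosh θ`.
As `θ → 0⁺`, l'Hôpital's rule gives `sinh x - x ∼ x³/6` and `sinh θ ∼ θ`, so `ρ → 8/6 = 4/3`
and the limits are `(15/32)(4/3)⁴ = 40/27` and `(3/32)(4/3)³ = 2/9`.
For `θ ≥ 1` we have `cosh θ ≤ 2 sinh θ` and `ρ ≤ sinh 2θ / sinh³ θ ≤ 4 / sinh θ`, so both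
coefficients are `O(1 / sinh² θ)` as `θ → ∞`.
-/

open Real Set Filter

/-- Second-order density coefficient of the pressureless `k = −1` Friedmann spacetime. -/
noncomputable def z4F (θ : ℝ) : ℝ :=
  30 * (Real.sinh (2 * θ) - 2 * θ) ^ 4 * (Real.cosh θ) ^ 2 / (Real.cosh (2 * θ) - 1) ^ 6

/-- Second-order velocity coefficient of the pressureless `k = −1` Friedmann spacetime. -/
noncomputable def w2F (θ : ℝ) : ℝ :=
  3 * (Real.sinh (2 * θ) - 2 * θ) ^ 3 * Real.cosh θ /
    (2 * (Real.cosh (2 * θ) - 1) ^ 4 * Real.sinh θ)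

open Topology

lemma tendsto_sinh_div_self : Tendsto (fun x => sinh x / x) (𝓝[≠] 0) (𝓝 1) := by
  refine HasDerivAt.lhopital_zero_nhdsNE (f' := cosh) (g' := fun _ => 1)
    (.of_forall hasDerivAt_sinh) (.of_forall hasDerivAt_id) (.of_forall fun _ => one_ne_zero)
    ((continuous_sinh.tendsto' 0 0 sinh_zero).mono_left nhdsWithin_le_nhds)
    nhdsWithin_le_nhds ?_
  simpa using (continuous_cosh.tendsto' 0 1 cosh_zero).mono_left nhdsWithin_le_nhds

lemma tendsto_cosh_sub_one_div_sq :
    Tendsto (fun x => (cosh x - 1) / x ^ 2) (𝓝[≠] 0) (𝓝 (1 / 2)) := by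
  refine HasDerivAt.lhopital_zero_nhdsNE (f' := sinh) (g' := fun x => 2 * x)
    (.of_forall fun x => (hasDerivAt_cosh x).sub_const 1)
    (.of_forall fun x => by simpa using hasDerivAt_pow 2 x)
    (eventually_mem_nhdsWithin.mono fun x hx => mul_ne_zero two_ne_zero hx)
    ((continuous_cosh.sub continuous_const).tendsto' 0 0 (by simp) |>.mono_left nhdsWithin_le_nhds)
    ((continuous_pow 2).tendsto' 0 0 (by simp) |>.mono_left nhdsWithin_le_nhds) ?_
  exact (tendsto_sinh_div_self.div_const 2).congr fun x => by ring

lemma tendsto_sinh_sub_self_div_cube :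
    Tendsto (fun x => (sinh x - x) / x ^ 3) (𝓝[≠] 0) (𝓝 (1 / 6)) := by
  refine HasDerivAt.lhopital_zero_nhdsNE (f' := fun x => cosh x - 1) (g' := fun x => 3 * x ^ 2)
    (.of_forall fun x => (hasDerivAt_sinh x).sub (hasDerivAt_id x))
    (.of_forall fun x => by simpa using hasDerivAt_pow 3 x)
    (eventually_mem_nhdsWithin.mono fun x hx => mul_ne_zero three_ne_zero (pow_ne_zero 2 hx))
    ((continuous_sinh.sub continuous_id).tendsto' 0 0 (by simp) |>.mono_left nhdsWithin_le_nhds)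
    ((continuous_pow 3).tendsto' 0 0 (by simp) |>.mono_left nhdsWithin_le_nhds) ?_
  convert tendsto_cosh_sub_one_div_sq.div_const 3 using 1
  · ext x; ring
  · norm_num

lemma cosh_two_mul_sub_one (x : ℝ) : cosh (2 * x) - 1 = 2 * sinh x ^ 2 := by
  rw [cosh_two_mul, cosh_sq]; ring

noncomputable def friedmannRatio (θ : ℝ) : ℝ := (sinh (2 * θ) - 2 * θ) / sinh θ ^ 3

lemma z4F_eq (θ : ℝ) : z4F θ = 15 / 32 * friedmannRatio θ ^ 4 * cosh θ ^ 2 := by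
  rw [z4F, friedmannRatio, cosh_two_mul_sub_one]; ring

lemma w2F_eq (θ : ℝ) : w2F θ = 3 / 32 * friedmannRatio θ ^ 3 * cosh θ := by
  rw [w2F, friedmannRatio, cosh_two_mul_sub_one]; ring

lemma friedmannRatio_eq_of_ne_zero {θ : ℝ} (hθ : θ ≠ 0) :
    friedmannRatio θ = 8 * ((sinh (2 * θ) - 2 * θ) / (2 * θ) ^ 3) / (sinh θ / θ) ^ 3 := by
  have hs : sinh θ ≠ 0 := by simpa using hθ
  rw [friedmannRatio]; field_simp; ring

lemma tendsto_friedmannRatio_nhdsNE_zero : Tendsto friedmannRatio (𝓝[≠] 0) (𝓝 (4 / 3)) := by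
  have h2 : Tendsto (fun θ : ℝ => 2 * θ) (𝓝[≠] 0) (𝓝[≠] 0) :=
    tendsto_nhdsWithin_of_tendsto_nhds_of_eventually_within _
      ((continuous_const_mul 2).tendsto' 0 0 (mul_zero 2) |>.mono_left nhdsWithin_le_nhds)
      (eventually_mem_nhdsWithin.mono fun x hx => mul_ne_zero two_ne_zero hx)
  have h := ((tendsto_sinh_sub_self_div_cube.comp h2).const_mul 8).div
    (tendsto_sinh_div_self.pow 3) (by norm_num)
  rw [show (4 / 3 : ℝ) = 8 * (1 / 6) / 1 ^ 3 by norm_num]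
  exact h.congr' <| eventually_mem_nhdsWithin.mono fun θ hθ =>
    (friedmannRatio_eq_of_ne_zero hθ).symm

lemma friedmannRatio_nonneg {θ : ℝ} (hθ : 0 ≤ θ) : 0 ≤ friedmannRatio θ :=
  div_nonneg (sub_nonneg.mpr (self_le_sinh_iff.mpr (by linarith)))
    (pow_nonneg (sinh_nonneg_iff.mpr hθ) 3)

lemma cosh_le_two_mul_sinh {x : ℝ} (hx : 1 ≤ x) : cosh x ≤ 2 * sinh x := by
  have := cosh_sub_sinh x
  have := exp_le_one_iff.mpr (by linarith : -x ≤ 0)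
  have := self_le_sinh_iff.mpr (by linarith : 0 ≤ x)
  linarith

lemma friedmannRatio_le {θ : ℝ} (hθ : 1 ≤ θ) : friedmannRatio θ ≤ 4 / sinh θ := by
  have hs : 0 < sinh θ := sinh_pos_iff.mpr (by linarith)
  rw [friedmannRatio, div_le_div_iff₀ (by positivity) hs]
  calc (sinh (2 * θ) - 2 * θ) * sinh θ ≤ sinh (2 * θ) * sinh θ := by gcongr; linarith
    _ = 2 * cosh θ * sinh θ ^ 2 := by rw [sinh_two_mul]; ring
    _ ≤ 2 * (2 * sinh θ) * sinh θ ^ 2 := by gcongr; exact cosh_le_two_mul_sinh hθ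
    _ = 4 * sinh θ ^ 3 := by ring

lemma tendsto_sinh_atTop : Tendsto sinh atTop atTop :=
  tendsto_atTop_mono' _ ((eventually_ge_atTop 0).mono fun _ hx => self_le_sinh_iff.mpr hx)
    tendsto_id

lemma tendsto_zero_of_le_div_sinh_sq {f : ℝ → ℝ} (C : ℝ) (hf₀ : ∀ θ, 1 ≤ θ → 0 ≤ f θ)
    (hf : ∀ θ, 1 ≤ θ → f θ ≤ C / sinh θ ^ 2) : Tendsto f atTop (𝓝 0) :=
  tendsto_of_tendsto_of_tendsto_of_le_of_le' tendsto_const_nhds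
    (tendsto_const_nhds.div_atTop ((tendsto_pow_atTop two_ne_zero).comp tendsto_sinh_atTop))
    ((eventually_ge_atTop 1).mono hf₀) ((eventually_ge_atTop 1).mono hf)

lemma tendsto_z4F_atTop : Tendsto z4F atTop (𝓝 0) := by
  refine tendsto_zero_of_le_div_sinh_sq 480 (fun θ _ => by rw [z4F_eq]; positivity) fun θ hθ => ?_
  have hs : 0 < sinh θ := sinh_pos_iff.mpr (by linarith)
  calc z4F θ = 15 / 32 * friedmannRatio θ ^ 4 * cosh θ ^ 2 := z4F_eq θ
    _ ≤ 15 / 32 * (4 / sinh θ) ^ 4 * (2 * sinh θ) ^ 2 := by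
      gcongr
      · exact friedmannRatio_nonneg (by linarith)
      · exact friedmannRatio_le hθ
      · exact cosh_le_two_mul_sinh hθ
    _ = 480 / sinh θ ^ 2 := by field_simp; ring

lemma tendsto_w2F_atTop : Tendsto w2F atTop (𝓝 0) := by
  refine tendsto_zero_of_le_div_sinh_sq 12
    (fun θ hθ => by rw [w2F_eq]; have := friedmannRatio_nonneg (by linarith : 0 ≤ θ); positivity)
    fun θ hθ => ?_
  have hs : 0 < sinh θ := sinh_pos_iff.mpr (by linarith)
  calc w2F θ = 3 / 32 * friedmannRatio θ ^ 3 * cosh θ := w2F_eq θ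
    _ ≤ 3 / 32 * (4 / sinh θ) ^ 3 * (2 * sinh θ) := by
      gcongr
      · exact friedmannRatio_nonneg (by linarith)
      · exact friedmannRatio_le hθ
      · exact cosh_le_two_mul_sinh hθ
    _ = 12 / sinh θ ^ 2 := by field_simp; ring

theorem k_neg_second_order_limits :
    Tendsto (fun θ => (z4F θ, w2F θ)) (nhdsWithin 0 (Ioi 0))
      (nhds ((40 / 27 : ℝ), (2 / 9 : ℝ))) ∧
    Tendsto (fun θ => (z4F θ, w2F θ)) atTop (nhds ((0 : ℝ), (0 : ℝ))) := by
  have hρ : Tendsto friedmannRatio (𝓝[>] 0) (𝓝 (4 / 3)) :=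
    tendsto_friedmannRatio_nhdsNE_zero.mono_left (nhdsWithin_mono _ fun _ hx => ne_of_gt hx)
  have hcosh : Tendsto cosh (𝓝[>] 0) (𝓝 1) :=
    (continuous_cosh.tendsto' 0 1 cosh_zero).mono_left nhdsWithin_le_nhds
  refine ⟨Tendsto.prodMk_nhds ?_ ?_, tendsto_z4F_atTop.prodMk_nhds tendsto_w2F_atTop⟩
  · convert (((hρ.pow 4).const_mul (15 / 32)).mul (hcosh.pow 2)).congr
      fun θ => (z4F_eq θ).symm using 2
    norm_num
  · convert (((hρ.pow 3).const_mul (3 / 32)).mul hcosh).congr fun θ => (w2F_eq θ).symm using 2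
    norm_num
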